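/- arXiv:1607.00500 — 3 statements merged into one kernel-verified Lean document; each statement's English description precedes it below -/
import Mathlib

section
/- (Kantorovich's inequality) Let Z be a random variable taking values in [m, M] with 0 < m ≤ M. Then E[Z]·E[1/Z] ≤ (m + M)²/(4mM). -/
/-!
On `[m, M]` the convex function `z ↦ 1 / z` lies below its chord, `1 / z ≤ (m + M - z) / (m M)`.
Integrating gives `E[1/Z] ≤ (m + M - E[Z]) / (m M)`, so `E[Z] E[1/Z] ≤ E[Z] (m + M - E[Z]) / (m M)`,
and `a (s - a) ≤ s² / 4` finishes the proof.
-/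

open MeasureTheory Set

lemma one_div_le_chord {m M z : ℝ} (hm : 0 < m) (hz : z ∈ Icc m M) :
    1 / z ≤ (m + M - z) / (m * M) := by
  have hz0 : 0 < z := hm.trans_le hz.1
  have hM : 0 < M := hz0.trans_le hz.2
  rw [div_le_div_iff₀ hz0 (mul_pos hm hM)]
  nlinarith [mul_nonneg (sub_nonneg.2 hz.1) (sub_nonneg.2 hz.2)]

lemma integral_one_div_le_chord {Ω : Type*} [MeasurableSpace Ω] {P : Measure Ω}
    [IsProbabilityMeasure P] {m M : ℝ} (hm : 0 < m) {Z : Ω → ℝ}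
    (hbd : ∀ᵐ ω ∂P, Z ω ∈ Icc m M) (hZint : Integrable Z P)
    (hZinvint : Integrable (fun ω => 1 / Z ω) P) :
    ∫ ω, 1 / Z ω ∂P ≤ (m + M - ∫ ω, Z ω ∂P) / (m * M) := by
  have hchord : Integrable (fun ω => (m + M - Z ω) / (m * M)) P :=
    ((integrable_const (m + M)).sub hZint).div_const _
  calc ∫ ω, 1 / Z ω ∂P ≤ ∫ ω, (m + M - Z ω) / (m * M) ∂P :=
        integral_mono_ae hZinvint hchord (hbd.mono fun _ hz => one_div_le_chord hm hz)
    _ = (m + M - ∫ ω, Z ω ∂P) / (m * M) := by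
        rw [integral_div, integral_sub (integrable_const _) hZint, integral_const, probReal_univ,
          one_smul]

lemma mul_le_sq_div_of_mul_le_sub {a b c s : ℝ} (ha : 0 ≤ a) (hc : 0 < c)
    (h : b * c ≤ s - a) : a * b ≤ s ^ 2 / (4 * c) := by
  rw [le_div_iff₀ (by positivity)]
  nlinarith [mul_le_mul_of_nonneg_left h ha, sq_nonneg (s - 2 * a)]

theorem kantorovich_inequality_general
    {Ω : Type*} [MeasurableSpace Ω] (P : Measure Ω) [IsProbabilityMeasure P]
    (m M : ℝ) (hm : 0 < m) (hmM : m ≤ M)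
    (Z : Ω → ℝ)
    (hbd : ∀ᵐ ω ∂P, m ≤ Z ω ∧ Z ω ≤ M)
    (hZint : Integrable Z P) (hZinvint : Integrable (fun ω => 1 / Z ω) P) :
    (∫ ω, Z ω ∂P) * (∫ ω, 1 / Z ω ∂P) ≤ (m + M) ^ 2 / (4 * m * M) := by
  have hmM0 : 0 < m * M := mul_pos hm (hm.trans_le hmM)
  have hEZ : 0 ≤ ∫ ω, Z ω ∂P :=
    integral_nonneg_of_ae (hbd.mono fun _ hz => hm.le.trans hz.1)
  have hEinv := integral_one_div_le_chord hm hbd hZint hZinvint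
  rw [mul_assoc 4]
  exact mul_le_sq_div_of_mul_le_sub hEZ hmM0 ((le_div_iff₀ hmM0).mp hEinv)

/-- Kantorovich's inequality: if `Z` takes values in `[m, M]` with `0 < m ≤ M` almost surely,
then `E[Z] · E[1/Z] ≤ (m + M)² / (4 m M)`. -/
theorem kantorovich_inequality
    {Ω : Type*} [MeasurableSpace Ω] (P : Measure Ω) [IsProbabilityMeasure P]
    (m M : ℝ) (hm : 0 < m) (hmM : m ≤ M)
    (Z : Ω → ℝ) (hZmeas : Measurable Z)
    (hbd : ∀ᵐ ω ∂P, m ≤ Z ω ∧ Z ω ≤ M)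
    (hZint : Integrable Z P) (hZinvint : Integrable (fun ω => 1 / Z ω) P) :
    (∫ ω, Z ω ∂P) * (∫ ω, 1 / Z ω ∂P) ≤ (m + M) ^ 2 / (4 * m * M) :=
  kantorovich_inequality_general P m M hm hmM Z hbd hZint hZinvint
end

section
/- For constants P_c > 0, c₁ ∈ ℝ, and I > 0, the function f(P) = (c₁ + log(P/I))/(P_c + P) on (0, ∞) attains its maximum at the unique P* > 0 satisfying P_c/P* = W(P_c e^{c₁ - 1}/I), where W is the principal Lambert W function, provided P_c e^{c₁-1}/I > 0. -/
open Real

private lemma lambert_exists_unique (y : ℝ) (hy : 0 < y) :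
    ∃! x : ℝ, 0 < x ∧ x * Real.exp x = y := by
  have hmono : StrictMonoOn (fun x : ℝ => x * Real.exp x) (Set.Ici 0) := by
    intro a ha b hb hab
    have : a * Real.exp a ≤ a * Real.exp b := by
      apply mul_le_mul_of_nonneg_left (le_of_lt (Real.exp_lt_exp.mpr hab)) ha
    calc a * Real.exp a ≤ a * Real.exp b := this
      _ < b * Real.exp b := by
          apply mul_lt_mul_of_pos_right hab (Real.exp_pos b)
  have hcont : ContinuousOn (fun x : ℝ => x * Real.exp x) (Set.Icc 0 y) :=
    (continuous_id.mul Real.continuous_exp).continuousOn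
  have h0 : (fun x : ℝ => x * Real.exp x) 0 = 0 := by simp
  have hy' : y ≤ y * Real.exp y := by
    nlinarith [Real.one_le_exp (le_of_lt hy)]
  have hivt := intermediate_value_Icc (le_of_lt hy) hcont
  have : y ∈ Set.Icc ((fun x : ℝ => x * Real.exp x) 0) ((fun x : ℝ => x * Real.exp x) y) := by
    simp only [h0]
    exact ⟨le_of_lt hy, hy'⟩
  obtain ⟨x, hx, hxy⟩ := hivt this
  have hxpos : 0 < x := by
    rcases lt_or_eq_of_le hx.1 with h | h
    · exact h
    · exfalso; rw [← h] at hxy; simp at hxy; linarith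
  have hxy' : x * Real.exp x = y := hxy
  refine ⟨x, ⟨hxpos, hxy'⟩, ?_⟩
  rintro z ⟨hz, hzy⟩
  by_contra hne
  rcases lt_or_gt_of_ne hne with h | h
  · have := hmono (le_of_lt hz) (le_of_lt hxpos) h
    simp only at this; rw [hzy, hxy'] at this; exact lt_irrefl _ this
  · have := hmono (le_of_lt hxpos) (le_of_lt hz) h
    simp only at this; rw [hzy, hxy'] at this; exact lt_irrefl _ this

/-- EE-optimal power: for `P_c > 0`, `c₁ ∈ ℝ` and `I > 0`, the energy efficiency
`f(P) = (c₁ + log(P/I))/(P_c + P)` on `(0, ∞)` attains its maximum at the unique `P* > 0`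
characterized (via the principal Lambert W function, i.e. the inverse of `x ↦ x eˣ` on
`[0,∞)`) by `P_c/P* · e^{P_c/P*} = P_c e^{c₁-1}/I`, i.e. `P_c/P* = W(P_c e^{c₁-1}/I)`. -/
theorem ee_optimal_power (Pc c₁ I : ℝ) (hPc : 0 < Pc) (hI : 0 < I) :
    ∃! Pstar : ℝ, 0 < Pstar ∧
      (Pc / Pstar) * Real.exp (Pc / Pstar) = Pc * Real.exp (c₁ - 1) / I ∧
      ∀ P : ℝ, 0 < P →
        (c₁ + Real.log (P / I)) / (Pc + P) ≤ (c₁ + Real.log (Pstar / I)) / (Pc + Pstar) := by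
  have hy : 0 < Pc * Real.exp (c₁ - 1) / I :=
    div_pos (mul_pos hPc (Real.exp_pos _)) hI
  obtain ⟨x, ⟨hx, hxy⟩, huniq⟩ := lambert_exists_unique _ hy
  set Pstar := Pc / x with hPs
  have hPspos : 0 < Pstar := div_pos hPc hx
  have hxP : Pc / Pstar = x := by
    rw [hPs]; field_simp
  -- key identity: c₁ + log(Pstar/I) = (Pc + Pstar)/Pstar
  have hlog : Real.log x + x = Real.log (Pc / I) + c₁ - 1 := by
    have := congrArg Real.log hxy
    rw [Real.log_mul (ne_of_gt hx) (ne_of_gt (Real.exp_pos x)),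
        Real.log_exp, Real.log_div (ne_of_gt (mul_pos hPc (Real.exp_pos _))) (ne_of_gt hI),
        Real.log_mul (ne_of_gt hPc) (ne_of_gt (Real.exp_pos _)), Real.log_exp] at this
    rw [Real.log_div (ne_of_gt hPc) (ne_of_gt hI)]
    linarith
  have hlogPs : Real.log Pstar = Real.log Pc - Real.log x := by
    rw [hPs, Real.log_div (ne_of_gt hPc) (ne_of_gt hx)]
  have hkey0 : c₁ + Real.log (Pstar / I) = 1 + x := by
    rw [Real.log_div (ne_of_gt hPspos) (ne_of_gt hI), hlogPs]
    rw [Real.log_div (ne_of_gt hPc) (ne_of_gt hI)] at hlog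
    linarith
  have hkey : c₁ + Real.log (Pstar / I) = (Pc + Pstar) / Pstar := by
    rw [hkey0, ← hxP]
    field_simp
    ring
  have hmax : ∀ P : ℝ, 0 < P →
      (c₁ + Real.log (P / I)) / (Pc + P) ≤ (c₁ + Real.log (Pstar / I)) / (Pc + Pstar) := by
    intro P hP
    have hfs : (c₁ + Real.log (Pstar / I)) / (Pc + Pstar) = 1 / Pstar := by
      rw [hkey]
      field_simp
    rw [hfs]
    rw [div_le_div_iff₀ (by linarith) hPspos]
    have hlogP : Real.log (P / I) = Real.log (P / Pstar) + Real.log (Pstar / I) := by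
      rw [← Real.log_mul (ne_of_gt (div_pos hP hPspos)) (ne_of_gt (div_pos hPspos hI))]
      congr 1
      field_simp
    have hle : Real.log (P / Pstar) ≤ P / Pstar - 1 :=
      Real.log_le_sub_one_of_pos (div_pos hP hPspos)
    have : c₁ + Real.log (Pstar / I) = (Pc + Pstar) / Pstar := hkey
    rw [hlogP]
    have h1 : (c₁ + (Real.log (P / Pstar) + Real.log (Pstar / I))) * Pstar
        = (Pc + Pstar) + Real.log (P / Pstar) * Pstar := by
      have : c₁ + Real.log (Pstar / I) = (Pc + Pstar) / Pstar := hkey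
      field_simp at this ⊢
      nlinarith [this]
    rw [h1]
    have h2 : (P / Pstar - 1) * Pstar = P - Pstar := by field_simp
    nlinarith [mul_le_mul_of_nonneg_right hle (le_of_lt hPspos), h2, hPspos]
  refine ⟨Pstar, ⟨hPspos, by rw [hxP]; exact hxy, hmax⟩, ?_⟩
  rintro P' ⟨hP', heq', _⟩
  have hx' : 0 < Pc / P' := div_pos hPc hP'
  have := huniq (Pc / P') ⟨hx', heq'⟩
  have : Pc / P' = x := this
  field_simp at this
  rw [hPs]
  field_simp
  nlinarith [this]
end

section
/- Let Z be a positive random variable with m ≤ Z ≤ M a.s. (0 < m ≤ M) and s > 0 a constant. Then E[log(1 + s/(a + Z))] ≤ ((m+M)²/(4mM)) · log(1 + E[s/(a+Z)]) for a ≥ 0, given that log(1 + s/(a+Z)) ≥ 0. -/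
/-!
The Kantorovich factor `(y + y')² / (4 y y')` is at least `1` by AM-GM, and `log (1 + E[Y]) ≥ 0`
since `Y ≥ 0`, so the bound already follows from Jensen's inequality
`E[log (1 + Y)] ≤ log (1 + E[Y])` for the concave function `log (1 + ·)`.
-/

open MeasureTheory Real Set

theorem one_le_sq_add_div_four_mul {x y : ℝ} (hxy : 0 < x * y) :
    1 ≤ (x + y) ^ 2 / (4 * x * y) := by
  rw [one_le_div (by rw [mul_assoc]; positivity)]
  exact four_mul_le_sq_add x y

theorem concaveOn_log_one_add : ConcaveOn ℝ (Ici 0) fun x : ℝ => log (1 + x) :=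
  (strictConcaveOn_log_Ioi.concaveOn.translate_right 1).subset
    (fun x (hx : 0 ≤ x) => show 0 < 1 + x by linarith) (convex_Ici 0)

theorem continuousOn_log_one_add : ContinuousOn (fun x : ℝ => log (1 + x)) (Ici 0) :=
  (continuousOn_const.add continuousOn_id).log fun x (hx : 0 ≤ x) =>
    (show (0 : ℝ) < 1 + x by linarith).ne'

theorem integral_log_one_add_le_log_one_add_integral {Ω : Type*} [MeasurableSpace Ω]
    {P : Measure Ω} [IsProbabilityMeasure P] {Y : Ω → ℝ} (hY : ∀ᵐ ω ∂P, 0 ≤ Y ω)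
    (hYi : Integrable Y P) (hlogi : Integrable (fun ω => log (1 + Y ω)) P) :
    ∫ ω, log (1 + Y ω) ∂P ≤ log (1 + ∫ ω, Y ω ∂P) :=
  concaveOn_log_one_add.le_map_integral continuousOn_log_one_add isClosed_Ici hY hYi hlogi

theorem kantorovich_log_rate_bound_general
    {Ω : Type*} [MeasurableSpace Ω] (P : Measure Ω) [IsProbabilityMeasure P]
    (m M a s : ℝ) (hm : 0 < m) (hmM : m ≤ M) (ha : 0 ≤ a) (hs : 0 < s)
    (Z : Ω → ℝ)
    (hbd : ∀ᵐ ω ∂P, m ≤ Z ω ∧ Z ω ≤ M)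
    (hint1 : Integrable (fun ω => Real.log (1 + s / (a + Z ω))) P)
    (hint2 : Integrable (fun ω => s / (a + Z ω)) P) :
    ∫ ω, Real.log (1 + s / (a + Z ω)) ∂P ≤
      ((s / (a + M) + s / (a + m)) ^ 2 / (4 * (s / (a + M)) * (s / (a + m)))) *
        Real.log (1 + ∫ ω, s / (a + Z ω) ∂P) := by
  have hY : ∀ᵐ ω ∂P, 0 ≤ s / (a + Z ω) :=
    hbd.mono fun ω hω => div_nonneg hs.le (by linarith [hω.1])
  have hjensen := integral_log_one_add_le_log_one_add_integral hY hint2 hint1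
  have hlog_nonneg : 0 ≤ log (1 + ∫ ω, s / (a + Z ω) ∂P) :=
    log_nonneg (by linarith [integral_nonneg_of_ae hY])
  have hfactor := one_le_sq_add_div_four_mul
    (mul_pos (div_pos hs (by linarith)) (div_pos hs (by linarith)) :
      0 < s / (a + M) * (s / (a + m)))
  exact hjensen.trans (le_mul_of_one_le_left hlog_nonneg hfactor)

/-- Kantorovich-based rate bound: let `Z` take values in `[m, M]` a.s. (`0 < m ≤ M`),
`a ≥ 0`, `s > 0`, and set `Y = s/(a + Z)` with bounds `y_min = s/(a+M)`,
`y_max = s/(a+m)`.  Then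
`E[log(1 + Y)] ≤ ((y_min + y_max)²/(4 y_min y_max)) · log(1 + E[Y])`. -/
theorem kantorovich_log_rate_bound
    {Ω : Type*} [MeasurableSpace Ω] (P : Measure Ω) [IsProbabilityMeasure P]
    (m M a s : ℝ) (hm : 0 < m) (hmM : m ≤ M) (ha : 0 ≤ a) (hs : 0 < s)
    (Z : Ω → ℝ) (hZmeas : Measurable Z)
    (hbd : ∀ᵐ ω ∂P, m ≤ Z ω ∧ Z ω ≤ M)
    (hint1 : Integrable (fun ω => Real.log (1 + s / (a + Z ω))) P)
    (hint2 : Integrable (fun ω => s / (a + Z ω)) P) :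
    ∫ ω, Real.log (1 + s / (a + Z ω)) ∂P ≤
      ((s / (a + M) + s / (a + m)) ^ 2 / (4 * (s / (a + M)) * (s / (a + m)))) *
        Real.log (1 + ∫ ω, s / (a + Z ω) ∂P) :=
  kantorovich_log_rate_bound_general P m M a s hm hmM ha hs Z hbd hint1 hint2
end
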